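/- For a special affine space A = (A, v⁰), the model vector space of the special affine dual A^# = Aff(A, I) = {affine φ : A → K with φ_v(v⁰) = 1} is canonically identified with Hom(Â/⟨v⁰⟩, K), i.e. with those linear functionals on the vector hull Â annihilating v⁰; and the double dual satisfies (A^#)^# ≅ A canonically. -/

import Mathlib

/-!
Affine functions on `A` are exactly the restrictions of linear functionals on the hull `Â`, so
`Aff(A, K) ≅ Â*`; under this identification the affine functions whose linear part kills `v⁰`
are the functionals annihilating `j v⁰`, i.e. `(Â/⟨v⁰⟩)*`.

For the double dual, a function `T + c` on `A^#` that grows by `1` under `φ ↦ φ + 1` extends to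
a linear functional `S = T + c·(φ ↦ φ_v(v⁰))` on `Aff(A, K) ≅ Â*` with `S 1 = 1`. By double
duality `S` is evaluation at a vector `w ∈ Â`, and `S 1 = 1` says `oneA w = 1`, so `w` is a
point of `A`. Injectivity holds because, as `v⁰ ≠ 0`, the functionals sending `v⁰` to `1`
already separate vectors.
-/

/-- A realization of the *vector hull* `Â` of an affine space `A`. -/
structure VectorHull (K : Type*) [Field K] (V : Type*) [AddCommGroup V] [Module K V]
    (A : Type*) [AddTorsor V A] (W : Type*) [AddCommGroup W] [Module K W] where
  ι : A → W
  j : V →ₗ[K] W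
  oneA : W →ₗ[K] K
  ι_injective : Function.Injective ι
  ι_vadd : ∀ (v : V) (a : A), ι (v +ᵥ a) = j v + ι a
  oneA_ι : ∀ a : A, oneA (ι a) = 1
  ker_oneA : LinearMap.ker oneA = LinearMap.range j
  span_range : Submodule.span K (Set.range ι) = ⊤

/-- Evaluation of the linear part of an affine function at a fixed model vector, as a linear
map on `Aff(A, K)`. -/
def linPartAt (K : Type*) [Field K] {V A : Type*} [AddCommGroup V] [Module K V]
    [AddTorsor V A] (v0 : V) : (A →ᵃ[K] K) →ₗ[K] K where
  toFun φ := φ.linear v0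
  map_add' f g := by simp [AffineMap.add_linear]
  map_smul' c f := by simp [AffineMap.smul_linear]

section AffineFunctions

variable {K V A : Type*} [Field K] [AddCommGroup V] [Module K V] [AddTorsor V A]

def AffineMap.applyₗ (a : A) : (A →ᵃ[K] K) →ₗ[K] K where
  toFun φ := φ a
  map_add' _ _ := rfl
  map_smul' _ _ := rfl

lemma Module.eq_zero_of_forall_dual_eq_one_apply_eq_zero {v0 v : V} (hv0 : v0 ≠ 0)
    (h : ∀ f : Module.Dual K V, f v0 = 1 → f v = 0) : v = 0 := by
  obtain ⟨f0, hf0⟩ := Module.Projective.exists_dual_eq_one K hv0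
  refine (Module.forall_dual_apply_eq_zero_iff K v).1 fun g => ?_
  simpa [hf0, h f0 hf0] using h (f0 + g - g v0 • f0) (by simp [hf0])

lemma AffineMap.exists_linear_eq (f : V →ₗ[K] K) : ∃ φ : A →ᵃ[K] K, φ.linear = f := by
  obtain ⟨b⟩ : Nonempty A := inferInstance
  exact ⟨f.toAffineMap.comp (AffineEquiv.vaddConst K b).symm.toAffineMap, by simp⟩

lemma AffineMap.eq_of_forall_linear_eq_one_apply_eq {v0 : V} (hv0 : v0 ≠ 0) {a b : A}
    (h : ∀ φ : A →ᵃ[K] K, φ.linear v0 = 1 → φ a = φ b) : a = b := by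
  rw [← vsub_eq_zero_iff_eq]
  refine Module.eq_zero_of_forall_dual_eq_one_apply_eq_zero (K := K) hv0 fun f hf => ?_
  obtain ⟨φ, rfl⟩ := AffineMap.exists_linear_eq (A := A) f
  rw [φ.linearMap_vsub, h φ hf, vsub_self]

end AffineFunctions

namespace VectorHull

variable {K V A W : Type*} [Field K] [AddCommGroup V] [Module K V] [AddTorsor V A]
  [AddCommGroup W] [Module K W] (H : VectorHull K V A W)

lemma oneA_j (v : V) : H.oneA (H.j v) = 0 := by
  rw [← LinearMap.mem_ker, H.ker_oneA]
  exact LinearMap.mem_range_self H.j v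

lemma j_injective : Function.Injective H.j := by
  obtain ⟨a⟩ : Nonempty A := inferInstance
  intro v v' h
  simpa using H.ι_injective (a₁ := v +ᵥ a) (a₂ := v' +ᵥ a) (by rw [H.ι_vadd, H.ι_vadd, h])

lemma ι_eq_j_vsub_add (a a0 : A) : H.ι a = H.j (a -ᵥ a0) + H.ι a0 := by
  rw [← H.ι_vadd, vsub_vadd]

lemma exists_ι_eq_of_oneA_eq_one {w : W} (hw : H.oneA w = 1) : ∃ a : A, H.ι a = w := by
  obtain ⟨a0⟩ : Nonempty A := inferInstance
  obtain ⟨v, hv⟩ : w - H.ι a0 ∈ LinearMap.range H.j := by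
    rw [← H.ker_oneA, LinearMap.mem_ker, map_sub, hw, H.oneA_ι, sub_self]
  exact ⟨v +ᵥ a0, by rw [H.ι_vadd, hv, sub_add_cancel]⟩

noncomputable def prodEquiv (a0 : A) : (V × K) ≃ₗ[K] W :=
  LinearEquiv.ofBijective (H.j.coprod (LinearMap.toSpanSingleton K W (H.ι a0))) <| by
    refine ⟨?_, fun w => ?_⟩
    · rw [← LinearMap.ker_eq_bot, LinearMap.ker_eq_bot']
      rintro ⟨v, t⟩ h
      simp only [LinearMap.coprod_apply, LinearMap.toSpanSingleton_apply] at h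
      have ht : t = 0 := by
        simpa [H.oneA_j, H.oneA_ι] using congrArg H.oneA h
      subst ht
      simpa using H.j_injective (a₂ := 0) (by simpa using h)
    · obtain ⟨v, hv⟩ : w - H.oneA w • H.ι a0 ∈ LinearMap.range H.j := by
        rw [← H.ker_oneA, LinearMap.mem_ker, map_sub, map_smul, H.oneA_ι, smul_eq_mul,
          mul_one, sub_self]
      exact ⟨(v, H.oneA w), by simp [hv]⟩

lemma prodEquiv_vsub_one (a a0 : A) : H.prodEquiv a0 (a -ᵥ a0, 1) = H.ι a := by
  rw [H.ι_eq_j_vsub_add a a0, ← one_smul K (H.ι a0)]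
  rfl

def restrict : Module.Dual K W →ₗ[K] (A →ᵃ[K] K) where
  toFun F :=
    { toFun := fun a => F (H.ι a)
      linear := F ∘ₗ H.j
      map_vadd' := fun a v => by simp [H.ι_vadd] }
  map_add' F G := by ext; rfl
  map_smul' c F := by ext; rfl

@[simp] lemma restrict_apply (F : Module.Dual K W) (a : A) : H.restrict F a = F (H.ι a) := rfl

lemma restrict_bijective : Function.Bijective H.restrict := by
  refine ⟨?_, fun ψ => ?_⟩
  · rw [← LinearMap.ker_eq_bot, LinearMap.ker_eq_bot']
    intro F hF
    refine LinearMap.ext_on_range H.span_range fun a => ?_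
    simpa using congrArg (· a) hF
  · obtain ⟨a0⟩ : Nonempty A := inferInstance
    refine ⟨(ψ.linear.coprod (LinearMap.toSpanSingleton K K (ψ a0))) ∘ₗ
      (H.prodEquiv a0).symm.toLinearMap, AffineMap.ext fun a => ?_⟩
    rw [restrict_apply, ← H.prodEquiv_vsub_one a a0]
    simp [ψ.linearMap_vsub]

noncomputable def dualEquivAffineMap : Module.Dual K W ≃ₗ[K] (A →ᵃ[K] K) :=
  LinearEquiv.ofBijective H.restrict H.restrict_bijective

@[simp] lemma dualEquivAffineMap_apply (F : Module.Dual K W) :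
    H.dualEquivAffineMap F = H.restrict F := rfl

lemma map_dualAnnihilator_span_j (v0 : V) :
    (Submodule.span K {H.j v0}).dualAnnihilator.map H.dualEquivAffineMap.toLinearMap =
      LinearMap.ker (linPartAt K (A := A) v0) := by
  rw [Submodule.map_equiv_eq_comap_symm]
  ext φ
  obtain ⟨F, rfl⟩ := H.dualEquivAffineMap.surjective φ
  rw [Submodule.mem_comap, LinearEquiv.coe_coe, LinearEquiv.symm_apply_apply,
    Submodule.mem_dualAnnihilator]
  change K ∙ H.j v0 ≤ LinearMap.ker F ↔ _
  rw [Submodule.span_singleton_le_iff_mem]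
  rfl

noncomputable def kerLinPartAtEquiv (v0 : V) :
    LinearMap.ker (linPartAt K (A := A) v0) ≃ₗ[K] Module.Dual K (W ⧸ K ∙ H.j v0) :=
  (H.dualEquivAffineMap.ofSubmodules _ _ (H.map_dualAnnihilator_span_j v0)).symm ≪≫ₗ
    (Submodule.dualQuotEquivDualAnnihilator _).symm

lemma kerLinPartAtEquiv_apply_mk (v0 : V) (φ : LinearMap.ker (linPartAt K (A := A) v0)) (a : A) :
    H.kerLinPartAtEquiv v0 φ (Submodule.Quotient.mk (H.ι a)) = φ.1 a := by
  rw [kerLinPartAtEquiv, LinearEquiv.trans_apply,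
    Submodule.dualQuotEquivDualAnnihilator_symm_apply_mk]
  change H.dualEquivAffineMap.symm φ.1 (H.ι a) = φ.1 a
  rw [← restrict_apply, ← dualEquivAffineMap_apply, LinearEquiv.apply_symm_apply]

lemma restrict_oneA : H.restrict H.oneA = AffineMap.const K A 1 := by
  ext a
  simp [H.oneA_ι]

theorem exists_eq_apply_of_map_const_one (H : VectorHull K V A W) [FiniteDimensional K V]
    (S : (A →ᵃ[K] K) →ₗ[K] K) (hS : S (AffineMap.const K A 1) = 1) : ∃ a : A, ∀ φ, S φ = φ a := by
  obtain ⟨a0⟩ : Nonempty A := inferInstance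
  have : FiniteDimensional K W := Module.Finite.equiv (H.prodEquiv a0)
  obtain ⟨w, hw⟩ := (Module.evalEquiv K W).surjective (S ∘ₗ H.dualEquivAffineMap.toLinearMap)
  have hS_eval (F : Module.Dual K W) : S (H.restrict F) = F w := by
    simpa using (LinearMap.congr_fun hw F).symm
  obtain ⟨a, rfl⟩ := H.exists_ι_eq_of_oneA_eq_one (by rw [← hS_eval, restrict_oneA, hS])
  refine ⟨a, fun φ => ?_⟩
  obtain ⟨F, rfl⟩ := H.restrict_bijective.surjective φ
  rw [hS_eval, restrict_apply]

end VectorHull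

/-- For a special affine space `A = (A, v⁰)`, `v⁰ ≠ 0`:
(1) the model vector space of the special affine dual `A^# = {φ ∈ Aff(A, K) : φ_v(v⁰) = 1}`,
namely `{φ ∈ Aff(A, K) : φ_v(v⁰) = 0}`, is canonically linearly isomorphic to
`Hom(Â/⟨v⁰⟩, K)` (linear functionals on the hull annihilating `v⁰`), the isomorphism being
compatible with evaluation at points of `A`; and
(2) `(A^#)^# ≅ A` canonically: the evaluation map `ev a = (φ ↦ φ(a))` is injective, affine,
and has range exactly the special affine functions on `A^#`, i.e. those `g : A^# → K` which
are affine (restrictions of affine functions of the ambient vector space `A†`) and whose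
linear part sends the distinguished vector `1_A` to `1`. -/
theorem stmt_10 {K V A W : Type*} [Field K]
    [AddCommGroup V] [Module K V] [AddTorsor V A]
    [AddCommGroup W] [Module K W] [FiniteDimensional K V]
    (H : VectorHull K V A W) (v0 : V) (hv0 : v0 ≠ 0) :
    (∃ e : LinearMap.ker (linPartAt K (A := A) v0) ≃ₗ[K]
        Module.Dual K (W ⧸ Submodule.span K {H.j v0}),
      ∀ (φ : LinearMap.ker (linPartAt K (A := A) v0)) (a : A),
        e φ (Submodule.Quotient.mk (H.ι a)) = φ.1 a) ∧
    (Function.Injective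
        (fun (a : A) => fun φ : {φ : A →ᵃ[K] K // φ.linear v0 = 1} => φ.1 a) ∧
      (∀ (v : V) (a : A) (φ : {φ : A →ᵃ[K] K // φ.linear v0 = 1}),
        φ.1 (v +ᵥ a) = φ.1.linear v + φ.1 a) ∧
      Set.range (fun (a : A) => fun φ : {φ : A →ᵃ[K] K // φ.linear v0 = 1} => φ.1 a) =
        {g : {φ : A →ᵃ[K] K // φ.linear v0 = 1} → K |
          (∃ (T : (A →ᵃ[K] K) →ₗ[K] K) (c : K), ∀ φ, g φ = T φ.1 + c) ∧
          ∀ φ : {φ : A →ᵃ[K] K // φ.linear v0 = 1},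
            g ⟨φ.1 + AffineMap.const K A (1 : K), by
              simp [AffineMap.add_linear, AffineMap.const_linear, φ.2]⟩ = g φ + 1}) := by
  refine ⟨⟨H.kerLinPartAtEquiv v0, H.kerLinPartAtEquiv_apply_mk v0⟩,
    fun a b hab => AffineMap.eq_of_forall_linear_eq_one_apply_eq hv0 fun φ hφ =>
      congrFun hab ⟨φ, hφ⟩,
    fun v a φ => φ.1.map_vadd a v, Set.ext fun g => ⟨?_, ?_⟩⟩
  · rintro ⟨a, rfl⟩
    exact ⟨⟨AffineMap.applyₗ a, 0, fun φ => (add_zero _).symm⟩, fun φ => rfl⟩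
  · rintro ⟨⟨T, c, hTc⟩, hshift⟩
    obtain ⟨f, hf⟩ := Module.Projective.exists_dual_eq_one K hv0
    obtain ⟨φ, rfl⟩ := AffineMap.exists_linear_eq (A := A) f
    have hT : T (AffineMap.const K A 1) = 1 := by
      have := hshift ⟨φ, hf⟩
      rw [hTc, hTc, map_add] at this
      linear_combination this
    obtain ⟨a, ha⟩ := H.exists_eq_apply_of_map_const_one (T + c • linPartAt K v0)
      (by simp [hT, linPartAt])
    exact ⟨a, funext fun ψ => by simpa [hTc, linPartAt, ψ.2] using (ha ψ.1).symm⟩
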